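/- LNS is not strongly successful on the candy graph: for the initial gossip graph G on agents {0,1,2,3,4,5} with N the reflexive closure of {(0,2),(0,3),(1,2),(5,2),(5,3),(4,3)} and S the identity, the call sequence 02;12;53;43;13;03;52;42 is LNS-permitted on G and terminal (no further call is LNS-permitted after it), yet not all agents are experts afterwards; in particular agent 5 knows neither the number nor the secret of agent 4 after executing it. -/
import Mathlib


set_option maxHeartbeats 1000000

structure GossipGraph (A : Type) : Type where
  N : A → A → Prop
  S : A → A → Prop
  refl_S : ∀ a, S a a
  S_sub_N : ∀ a b, S a b → N a b

namespace Gossip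

variable {A : Type}

def Initial (G : GossipGraph A) : Prop := ∀ a b, G.S a b ↔ a = b

def doCall (G : GossipGraph A) (c : A × A) : GossipGraph A where
  N x y := G.N x y ∨ ((x = c.1 ∨ x = c.2) ∧ (G.N c.1 y ∨ G.N c.2 y))
  S x y := G.S x y ∨ ((x = c.1 ∨ x = c.2) ∧ (G.S c.1 y ∨ G.S c.2 y))
  refl_S a := Or.inl (G.refl_S a)
  S_sub_N a b h := by
    rcases h with h | ⟨h1, h2 | h2⟩
    · exact Or.inl (G.S_sub_N a b h)
    · exact Or.inr ⟨h1, Or.inl (G.S_sub_N _ _ h2)⟩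
    · exact Or.inr ⟨h1, Or.inr (G.S_sub_N _ _ h2)⟩

def doCalls (G : GossipGraph A) (σ : List (A × A)) : GossipGraph A :=
  σ.foldl doCall G

def PossibleSeq (G : GossipGraph A) : List (A × A) → Prop
  | [] => True
  | c :: σ => c.1 ≠ c.2 ∧ G.N c.1 c.2 ∧ PossibleSeq (doCall G c) σ

mutual
  inductive Form (A : Type) : Type where
    | top : Form A
    | atomN : A → A → Form A
    | atomS : A → A → Form A
    | neg : Form A → Form A
    | conj : Form A → Form A → Form A
    | K : A → (A → A → Form A) → Form A → Form A
    | box : Prog A → Form A → Form A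
  inductive Prog (A : Type) : Type where
    | test : Form A → Prog A
    | call : A → A → Prog A
    | seq : Prog A → Prog A → Prog A
    | cup : Prog A → Prog A → Prog A
    | star : Prog A → Prog A
end

abbrev Protocol (A : Type) := A → A → Form A

inductive Epi (G : GossipGraph A) (perm : List (A × A) → (A × A) → Prop) (a : A) :
    List (A × A) → List (A × A) → Prop where
  | refl : Epi G perm a [] []
  | call_out {σ τ : List (A × A)} {b : A} :
      Epi G perm a σ τ →
      (∀ x, (doCalls G σ).N b x ↔ (doCalls G τ).N b x) →
      (∀ x, (doCalls G σ).S b x ↔ (doCalls G τ).S b x) →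
      perm σ (a, b) → perm τ (a, b) →
      Epi G perm a (σ ++ [(a, b)]) (τ ++ [(a, b)])
  | call_in {σ τ : List (A × A)} {b : A} :
      Epi G perm a σ τ →
      (∀ x, (doCalls G σ).N b x ↔ (doCalls G τ).N b x) →
      (∀ x, (doCalls G σ).S b x ↔ (doCalls G τ).S b x) →
      perm σ (b, a) → perm τ (b, a) →
      Epi G perm a (σ ++ [(b, a)]) (τ ++ [(b, a)])
  | other {σ τ : List (A × A)} {c d e f : A} :
      Epi G perm a σ τ →
      c ≠ a → d ≠ a → e ≠ a → f ≠ a →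
      perm σ (c, d) → perm τ (e, f) →
      Epi G perm a (σ ++ [(c, d)]) (τ ++ [(e, f)])

mutual
  def Sat (G : GossipGraph A) : List (A × A) → Form A → Prop
    | _, Form.top => True
    | σ, Form.atomN a b => (doCalls G σ).N a b
    | σ, Form.atomS a b => (doCalls G σ).S a b
    | σ, Form.neg φ => ¬ Sat G σ φ
    | σ, Form.conj φ ψ => Sat G σ φ ∧ Sat G σ ψ
    | σ, Form.K a P φ =>
        ∀ τ, Epi G (fun ρ c => c.1 ≠ c.2 ∧ (doCalls G ρ).N c.1 c.2 ∧ Sat G ρ (P c.1 c.2)) a τ σ →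
          Sat G τ φ
    | σ, Form.box π φ => ∀ τ, ProgRel G π σ τ → Sat G τ φ
  def ProgRel (G : GossipGraph A) : Prog A → List (A × A) → List (A × A) → Prop
    | Prog.test φ, σ, τ => σ = τ ∧ Sat G σ φ
    | Prog.call a b, σ, τ => a ≠ b ∧ (doCalls G σ).N a b ∧ τ = σ ++ [(a, b)]
    | Prog.seq π π', σ, τ => ∃ ρ, ProgRel G π σ ρ ∧ ProgRel G π' ρ τ
    | Prog.cup π π', σ, τ => ProgRel G π σ τ ∨ ProgRel G π' σ τ
    | Prog.star π, σ, τ => Relation.ReflTransGen (fun x y => ProgRel G π x y) σ τ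
end


/-- A call `ab` is `P`-permitted at `(G, σ)` iff `a ≠ b`, `N^σ a b` and `G,σ ⊨ P_{ab}`. -/
def Permits (G : GossipGraph A) (P : Protocol A) (σ : List (A × A)) (c : A × A) : Prop :=
  c.1 ≠ c.2 ∧ (doCalls G σ).N c.1 c.2 ∧ Sat G σ (P c.1 c.2)

/-- The least set of call sequences containing `ε` and closed under adding permitted calls. -/
inductive Ext (G : GossipGraph A) (perm : List (A × A) → (A × A) → Prop) : List (A × A) → Prop where
  | nil : Ext G perm []
  | snoc {σ : List (A × A)} {c : A × A} : Ext G perm σ → perm σ c → Ext G perm (σ ++ [c])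

/-- The extension of a syntactic protocol `P` on an (initial) gossip graph `G`. -/
def extension (P : Protocol A) (G : GossipGraph A) : Set (List (A × A)) :=
  { σ | Ext G (Permits G P) σ }

/-- A formula is valid iff it is true at every gossip state, i.e. at every pair of an
initial gossip graph and a call sequence possible on it. -/
def Valid (φ : Form A) : Prop :=
  ∀ G : GossipGraph A, Initial G → ∀ σ : List (A × A), PossibleSeq G σ → Sat G σ φ

def impF (φ ψ : Form A) : Form A := Form.neg (Form.conj φ (Form.neg ψ))
def orF (φ ψ : Form A) : Form A := Form.neg (Form.conj (Form.neg φ) (Form.neg ψ))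
def iffF (φ ψ : Form A) : Form A := Form.conj (impF φ ψ) (impF ψ φ)
/-- The epistemic "possibility" dual `K̂ := ¬K¬`. -/
def hatK (a : A) (P : Protocol A) (φ : Form A) : Form A := Form.neg (Form.K a P (Form.neg φ))

/-- A semantic protocol, as raw data: a map from (initial) gossip graphs to sets of call
sequences. -/
abbrev RawSem (A : Type) := GossipGraph A → Set (List (A × A))

/-- For a semantic protocol, a call `c` is permitted at `(G,σ)` iff `σ;c ∈ P(G)`. -/
def semPerm (Q : RawSem A) (G : GossipGraph A) (σ : List (A × A)) (c : A × A) : Prop :=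
  σ ++ [c] ∈ Q G

/-- `σ` is terminal (in `Q(G)`) iff no further call is permitted. -/
def TerminalIn (Q : RawSem A) (G : GossipGraph A) (σ : List (A × A)) : Prop :=
  ∀ c : A × A, σ ++ [c] ∉ Q G

/-- All agents are experts: everyone knows all secrets. -/
def AllExpert (G : GossipGraph A) : Prop := ∀ a b : A, G.S a b

/-- A semantic protocol: assigns to each initial gossip graph a set of call sequences
possible on it, containing the empty sequence and closed under prefixes. -/
structure SemProtocol (A : Type) : Type where
  ext : GossipGraph A → Set (List (A × A))
  nil_mem : ∀ G : GossipGraph A, Initial G → [] ∈ ext G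
  prefix_closed : ∀ G : GossipGraph A, Initial G → ∀ σ c, σ ++ [c] ∈ ext G → σ ∈ ext G
  possible : ∀ G : GossipGraph A, Initial G → ∀ σ ∈ ext G, PossibleSeq G σ

/-- A semantic protocol is epistemic iff a call `ab` is permitted at `(G,σ)` exactly when it
is permitted at all states that agent `a` cannot distinguish from `(G,σ)`. -/
def SemEpistemic (Q : RawSem A) : Prop :=
  ∀ G : GossipGraph A, Initial G → ∀ σ ∈ Q G, ∀ a b : A, a ≠ b →
    (σ ++ [(a, b)] ∈ Q G ↔ ∀ τ, Epi G (semPerm Q G) a τ σ → τ ++ [(a, b)] ∈ Q G)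

/-- Relabelling the agents of a gossip graph along a permutation. -/
def mapGraph (J : Equiv.Perm A) (G : GossipGraph A) : GossipGraph A where
  N x y := G.N (J.symm x) (J.symm y)
  S x y := G.S (J.symm x) (J.symm y)
  refl_S a := G.refl_S _
  S_sub_N a b h := G.S_sub_N _ _ h

/-- Relabelling a call sequence, callwise. -/
def mapSeq (J : Equiv.Perm A) (σ : List (A × A)) : List (A × A) :=
  σ.map (fun c => (J c.1, J c.2))

mutual
  /-- Relabelling the agents in a formula along a permutation. -/
  def mapForm (J : Equiv.Perm A) : Form A → Form A
    | Form.top => Form.top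
    | Form.atomN a b => Form.atomN (J a) (J b)
    | Form.atomS a b => Form.atomS (J a) (J b)
    | Form.neg φ => Form.neg (mapForm J φ)
    | Form.conj φ ψ => Form.conj (mapForm J φ) (mapForm J ψ)
    | Form.K a P φ => Form.K (J a) (fun x y => mapForm J (P (J.symm x) (J.symm y))) (mapForm J φ)
    | Form.box π φ => Form.box (mapProg J π) (mapForm J φ)
  /-- Relabelling the agents in a program along a permutation. -/
  def mapProg (J : Equiv.Perm A) : Prog A → Prog A
    | Prog.test φ => Prog.test (mapForm J φ)
    | Prog.call a b => Prog.call (J a) (J b)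
    | Prog.seq π π' => Prog.seq (mapProg J π) (mapProg J π')
    | Prog.cup π π' => Prog.cup (mapProg J π) (mapProg J π')
    | Prog.star π => Prog.star (mapProg J π)
end

/-- A semantic protocol is symmetric iff it commutes with relabelling of the agents. -/
def SemSymmetric (Q : RawSem A) : Prop :=
  ∀ (J : Equiv.Perm A) (G : GossipGraph A), Initial G →
    Q (mapGraph J G) = mapSeq J '' Q G

def listConj (l : List (Form A)) : Form A := l.foldr Form.conj Form.top
def listDisj (l : List (Form A)) : Form A := l.foldr orF (Form.neg Form.top)

noncomputable def pairsList (A : Type) [Fintype A] : List (A × A) := (Finset.univ : Finset (A × A)).toList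
noncomputable def distinctPairs (A : Type) [Fintype A] [DecidableEq A] : List (A × A) :=
  (pairsList A).filter (fun c => decide (c.1 ≠ c.2))

/-- The formula `Ex`: all agents are experts. -/
noncomputable def ExForm (A : Type) [Fintype A] : Form A :=
  listConj ((pairsList A).map (fun c => Form.atomS c.1 c.2))

/-- `Ex ∨ ⋁_{i≠j} (N_ij ∧ P_ij)`. -/
noncomputable def oneStepBody (A : Type) [Fintype A] [DecidableEq A] (P : Protocol A) : Form A :=
  orF (ExForm A) (listDisj ((distinctPairs A).map (fun c => Form.conj (Form.atomN c.1 c.2) (P c.1 c.2))))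

/-- Hard one-step strengthening: `P_ab ∧ K_a^P [ab](Ex ∨ ⋁_{i≠j}(N_ij ∧ P_ij))`. -/
noncomputable def hardOneStep {A : Type} [Fintype A] [DecidableEq A] (P : Protocol A) : Protocol A :=
  fun a b => Form.conj (P a b) (Form.K a P (Form.box (Prog.call a b) (oneStepBody A P)))

/-- Soft one-step strengthening: `P_ab ∧ K̂_a^P [ab](Ex ∨ ⋁_{i≠j}(N_ij ∧ P_ij))`. -/
noncomputable def softOneStep {A : Type} [Fintype A] [DecidableEq A] (P : Protocol A) : Protocol A :=
  fun a b => Form.conj (P a b) (hatK a P (Form.box (Prog.call a b) (oneStepBody A P)))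

/-- The protocol `P` as a program:
`(⋃_{a≠b} ?(N_ab ∧ P_ab);ab)* ; ?⋀_{a≠b} ¬(N_ab ∧ P_ab)`. -/
noncomputable def protProg (A : Type) [Fintype A] [DecidableEq A] (P : Protocol A) : Prog A :=
  Prog.seq
    (Prog.star (((distinctPairs A).map (fun c =>
      Prog.seq (Prog.test (Form.conj (Form.atomN c.1 c.2) (P c.1 c.2))) (Prog.call c.1 c.2))).foldr
        Prog.cup (Prog.test (Form.neg Form.top))))
    (Prog.test (listConj ((distinctPairs A).map (fun c =>
      Form.neg (Form.conj (Form.atomN c.1 c.2) (P c.1 c.2))))))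

/-- Hard look-ahead strengthening: `P_ab ∧ K_a^P [ab]⟨P⟩Ex`. -/
noncomputable def hardLookAhead {A : Type} [Fintype A] [DecidableEq A] (P : Protocol A) : Protocol A :=
  fun a b => Form.conj (P a b)
    (Form.K a P (Form.box (Prog.call a b)
      (Form.neg (Form.box (protProg A P) (Form.neg (ExForm A))))))

/-- Soft look-ahead strengthening: `P_ab ∧ K̂_a^P [ab]⟨P⟩Ex`. -/
noncomputable def softLookAhead {A : Type} [Fintype A] [DecidableEq A] (P : Protocol A) : Protocol A :=
  fun a b => Form.conj (P a b)
    (hatK a P (Form.box (Prog.call a b)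
      (Form.neg (Form.box (protProg A P) (Form.neg (ExForm A))))))

/-- Hard uniform backward defoliation of a semantic protocol. -/
def HUBD (Q : RawSem A) : RawSem A := fun G =>
  { σ | σ ∈ Q G ∧ (σ = [] ∨ ∃ τ : List (A × A), ∃ a b : A, σ = τ ++ [(a, b)] ∧
      ∀ τ', Epi G (semPerm Q G) a τ' τ →
        (τ' ++ [(a, b)] ∈ Q G ∧ TerminalIn Q G (τ' ++ [(a, b)])) →
          AllExpert (doCalls G (τ' ++ [(a, b)]))) }

/-- Soft uniform backward defoliation of a semantic protocol. -/
def SUBD (Q : RawSem A) : RawSem A := fun G =>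
  { σ | σ ∈ Q G ∧ (σ = [] ∨ ∃ τ : List (A × A), ∃ a b : A, σ = τ ++ [(a, b)] ∧
      ∃ τ', Epi G (semPerm Q G) a τ' τ ∧
        ((τ' ++ [(a, b)] ∈ Q G ∧ TerminalIn Q G (τ' ++ [(a, b)])) →
          AllExpert (doCalls G (τ' ++ [(a, b)])))) }

/-- The syntactic protocol LNS: `LNS_ab := ¬ S_ab`. -/
def LNSsyn (A : Type) : Protocol A := fun a b => Form.neg (Form.atomS a b)

/-- LNS-permitted: call `ab` permitted at `(G,σ)` iff `N^σ a b` and not `S^σ a b`. -/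
def LNSperm (G : GossipGraph A) (σ : List (A × A)) (c : A × A) : Prop :=
  c.1 ≠ c.2 ∧ (doCalls G σ).N c.1 c.2 ∧ ¬ (doCalls G σ).S c.1 c.2

/-- LNS as a semantic protocol. -/
def LNSsem : RawSem A := fun G => { σ | Ext G (LNSperm G) σ }

/-- A semantic protocol is strongly successful on `G` iff every terminal sequence makes
all agents experts. -/
def StronglySuccessfulOn (Q : RawSem A) (G : GossipGraph A) : Prop :=
  ∀ σ ∈ Q G, TerminalIn Q G σ → AllExpert (doCalls G σ)

/-- A semantic protocol is weakly successful on `G` iff some terminal sequence makes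
all agents experts. -/
def WeaklySuccessfulOn (Q : RawSem A) (G : GossipGraph A) : Prop :=
  ∃ σ ∈ Q G, TerminalIn Q G σ ∧ AllExpert (doCalls G σ)


/-- The "candy" initial gossip graph on agents 0,...,5:
`N` is the reflexive closure of {(0,2),(0,3),(1,2),(5,2),(5,3),(4,3)} and `S` is the identity. -/
def candy : GossipGraph (Fin 6) where
  N x y := x = y ∨ (x = 0 ∧ y = 2) ∨ (x = 0 ∧ y = 3) ∨ (x = 1 ∧ y = 2) ∨
           (x = 5 ∧ y = 2) ∨ (x = 5 ∧ y = 3) ∨ (x = 4 ∧ y = 3)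
  S x y := x = y
  refl_S a := rfl
  S_sub_N a b h := Or.inl h

/-- The unsuccessful call sequence `02;12;53;43;13;03;52;42` on the candy graph. -/
def badSeq : List (Fin 6 × Fin 6) :=
  [(0, 2), (1, 2), (5, 3), (4, 3), (1, 3), (0, 3), (5, 2), (4, 2)]

section CandyAux

/-- Boolean mirror of a gossip graph on `Fin 6`. -/
structure BGraph : Type where
  bN : Fin 6 → Fin 6 → Bool
  bS : Fin 6 → Fin 6 → Bool

def bCall (B : BGraph) (c : Fin 6 × Fin 6) : BGraph where
  bN x y := B.bN x y || ((x == c.1 || x == c.2) && (B.bN c.1 y || B.bN c.2 y))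
  bS x y := B.bS x y || ((x == c.1 || x == c.2) && (B.bS c.1 y || B.bS c.2 y))

def bCandy : BGraph where
  bN x y := x == y || (x == 0 && y == 2) || (x == 0 && y == 3) || (x == 1 && y == 2) ||
            (x == 5 && y == 2) || (x == 5 && y == 3) || (x == 4 && y == 3)
  bS x y := x == y

def bCalls (σ : List (Fin 6 × Fin 6)) : BGraph := σ.foldl bCall bCandy

lemma mirror (σ : List (Fin 6 × Fin 6)) :
    ∀ (G : GossipGraph (Fin 6)) (B : BGraph),
      (∀ x y, G.N x y ↔ B.bN x y = true) → (∀ x y, G.S x y ↔ B.bS x y = true) →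
      (∀ x y, (doCalls G σ).N x y ↔ (σ.foldl bCall B).bN x y = true) ∧
      (∀ x y, (doCalls G σ).S x y ↔ (σ.foldl bCall B).bS x y = true) := by
  induction σ with
  | nil => intro G B hN hS; exact ⟨hN, hS⟩
  | cons c σ ih =>
    intro G B hN hS
    have hN' : ∀ x y, (doCall G c).N x y ↔ (bCall B c).bN x y = true := by
      intro x y; simp [doCall, bCall, hN, hS]
    have hS' : ∀ x y, (doCall G c).S x y ↔ (bCall B c).bS x y = true := by
      intro x y; simp [doCall, bCall, hN, hS]
    exact ih (doCall G c) (bCall B c) hN' hS'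

lemma candy_mirror (σ : List (Fin 6 × Fin 6)) :
    (∀ x y, (doCalls candy σ).N x y ↔ (bCalls σ).bN x y = true) ∧
    (∀ x y, (doCalls candy σ).S x y ↔ (bCalls σ).bS x y = true) := by
  apply mirror
  · intro x y; simp [candy, bCandy]; tauto
  · intro x y; simp [candy, bCandy]

lemma LNSperm_iff (σ : List (Fin 6 × Fin 6)) (c : Fin 6 × Fin 6) :
    LNSperm candy σ c ↔
      (c.1 ≠ c.2 ∧ (bCalls σ).bN c.1 c.2 = true ∧ ¬ (bCalls σ).bS c.1 c.2 = true) := by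
  obtain ⟨hN, hS⟩ := candy_mirror σ
  simp [LNSperm, hN, hS]

lemma LNSperm_of (σ : List (Fin 6 × Fin 6)) (c : Fin 6 × Fin 6)
    (h : (c.1 != c.2 && (bCalls σ).bN c.1 c.2 && !(bCalls σ).bS c.1 c.2) = true) :
    LNSperm candy σ c := by
  rw [LNSperm_iff]
  simp only [Bool.and_eq_true, bne_iff_ne, ne_eq, Bool.not_eq_true'] at h
  exact ⟨h.1.1, h.1.2, by simp [h.2]⟩

lemma ext_snoc_perm {G : GossipGraph A} {perm : List (A × A) → (A × A) → Prop}
    {σ : List (A × A)} {c : A × A} (h : Ext G perm (σ ++ [c])) : perm σ c := by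
  generalize hρ : σ ++ [c] = ρ at h
  cases h with
  | nil => simp at hρ
  | @snoc σ' c' h' p =>
    obtain ⟨h1, h2⟩ := List.append_inj' hρ rfl
    simp only [List.cons.injEq] at h2
    rw [h1, h2.1]; exact p

end CandyAux

/-- LNS is not strongly successful on the candy graph: the sequence `02;12;53;43;13;03;52;42`
is LNS-permitted and terminal, yet not all agents are experts afterwards; in particular
agent 5 knows neither the number nor the secret of agent 4. -/
theorem LNS_not_strongly_successful_on_candy :
    Initial candy ∧
    badSeq ∈ LNSsem (A := Fin 6) candy ∧
    TerminalIn (LNSsem (A := Fin 6)) candy badSeq ∧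
    ¬ AllExpert (doCalls candy badSeq) ∧
    ¬ (doCalls candy badSeq).N 5 4 ∧
    ¬ (doCalls candy badSeq).S 5 4 ∧
    ¬ StronglySuccessfulOn (LNSsem (A := Fin 6)) candy := by
  have hmem : badSeq ∈ LNSsem (A := Fin 6) candy := by
    show Ext candy (LNSperm candy) badSeq
    exact Ext.snoc (Ext.snoc (Ext.snoc (Ext.snoc (Ext.snoc (Ext.snoc (Ext.snoc (Ext.snoc
      Ext.nil
      (LNSperm_of [] (0, 2) (by decide)))
      (LNSperm_of [(0,2)] (1, 2) (by decide)))
      (LNSperm_of [(0,2),(1,2)] (5, 3) (by decide)))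
      (LNSperm_of [(0,2),(1,2),(5,3)] (4, 3) (by decide)))
      (LNSperm_of [(0,2),(1,2),(5,3),(4,3)] (1, 3) (by decide)))
      (LNSperm_of [(0,2),(1,2),(5,3),(4,3),(1,3)] (0, 3) (by decide)))
      (LNSperm_of [(0,2),(1,2),(5,3),(4,3),(1,3),(0,3)] (5, 2) (by decide)))
      (LNSperm_of [(0,2),(1,2),(5,3),(4,3),(1,3),(0,3),(5,2)] (4, 2) (by decide))
  have hterm : TerminalIn (LNSsem (A := Fin 6)) candy badSeq := by
    intro c hc
    have hp := ext_snoc_perm hc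
    rw [LNSperm_iff] at hp
    have key : ∀ c : Fin 6 × Fin 6,
        ¬ (c.1 ≠ c.2 ∧ (bCalls badSeq).bN c.1 c.2 = true ∧
            ¬ (bCalls badSeq).bS c.1 c.2 = true) := by decide
    exact key c hp
  have hS54 : ¬ (doCalls candy badSeq).S 5 4 := by
    rw [(candy_mirror badSeq).2 5 4]; decide
  have hN54 : ¬ (doCalls candy badSeq).N 5 4 := by
    rw [(candy_mirror badSeq).1 5 4]; decide
  have hne : ¬ AllExpert (doCalls candy badSeq) := fun h => hS54 (h 5 4)
  exact ⟨fun a b => Iff.rfl, hmem, hterm, hne, hN54, hS54,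
    fun h => hne (h badSeq hmem hterm)⟩

end Gossip
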